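/- Every chordal graph with at least one edge has an effective competition cover. -/

import Mathlib

/-- A digraph (given by its arc relation) is acyclic if it has no directed cycle. -/
def Digraph.Acyclic {W : Type*} (A : W → W → Prop) : Prop :=
  ∀ v, ¬ Relation.TransGen A v v

/-- The competition graph of a digraph: distinct `x`, `y` are adjacent iff
they have a common out-neighbor. -/
def competitionGraph {W : Type*} (A : W → W → Prop) : SimpleGraph W where
  Adj x y := x ≠ y ∧ ∃ z, A x z ∧ A y z
  symm := by
    constructor
    rintro x y ⟨h, z, hx, hy⟩
    exact ⟨h.symm, z, hy, hx⟩
  loopless := by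
    constructor
    rintro x ⟨h, -⟩
    exact h rfl

/-- `G` together with `k` additional isolated vertices. -/
def addIsolated {V : Type*} (G : SimpleGraph V) (k : ℕ) : SimpleGraph (V ⊕ Fin k) where
  Adj x y := ∃ u v, G.Adj u v ∧ x = Sum.inl u ∧ y = Sum.inl v
  symm := by
    constructor
    rintro x y ⟨u, v, h, rfl, rfl⟩
    exact ⟨v, u, h.symm, rfl, rfl⟩
  loopless := by
    constructor
    rintro x ⟨u, v, h, rfl, hy⟩
    exact G.loopless.irrefl u (Sum.inl.inj hy ▸ h)

/-- `F` is an edge clique cover of `G`. -/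
def IsEdgeCliqueCover {V : Type*} (G : SimpleGraph V) (F : Finset (Set V)) : Prop :=
  (∀ C ∈ F, G.IsClique C) ∧ ∀ u v, G.Adj u v → ∃ C ∈ F, u ∈ C ∧ v ∈ C

/-- The edge clique cover number `θ_e(G)`. -/
noncomputable def eccNumber {V : Type*} (G : SimpleGraph V) : ℕ :=
  sInf {n | ∃ F : Finset (Set V), IsEdgeCliqueCover G F ∧ F.card = n}

/-- An acyclic digraph `A` on `V ⊕ Fin k` realizes `G` with `k` added isolated vertices
if its competition graph is `G` together with `k` isolated vertices. -/
def Realizes {V : Type*} (G : SimpleGraph V) (k : ℕ)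
    (A : (V ⊕ Fin k) → (V ⊕ Fin k) → Prop) : Prop :=
  Digraph.Acyclic A ∧ competitionGraph A = addIsolated G k

/-- The competition number `k(G)`. -/
noncomputable def compNumber {V : Type*} (G : SimpleGraph V) : ℕ :=
  sInf {k | ∃ A : (V ⊕ Fin k) → (V ⊕ Fin k) → Prop, Realizes G k A}

/-- The primary predator index `p(G)`: the maximum number of in-degree-0 vertices over
all acyclic digraphs whose competition graph is `G` plus `k(G)` isolated vertices. -/
noncomputable def predatorIndex {V : Type*} (G : SimpleGraph V) : ℕ :=
  sSup {n | ∃ A : (V ⊕ Fin (compNumber G)) → (V ⊕ Fin (compNumber G)) → Prop,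
    Realizes G (compNumber G) A ∧ {v | ∀ u, ¬ A u v}.ncard = n}

/-- `C` is a maximal clique of `G`. -/
def IsMaximalClique {V : Type*} (G : SimpleGraph V) (C : Set V) : Prop :=
  G.IsClique C ∧ ∀ D : Set V, G.IsClique D → C ⊆ D → C = D

/-- The acyclic digraph `A` accompanies the minimum edge clique cover `𝒞`. -/
def Accompanies {V : Type*} (G : SimpleGraph V) (𝒞 : Finset (Set V))
    (A : (V ⊕ Fin (compNumber G)) → (V ⊕ Fin (compNumber G)) → Prop) : Prop :=
  Realizes G (compNumber G) A ∧
  ∃ w : 𝒞 → (V ⊕ Fin (compNumber G)), Function.Injective w ∧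
    (∀ C : 𝒞, ∀ v ∈ (C : Set V), A (Sum.inl v) (w C)) ∧
    {x | ∃ u, A u x} = Set.range w

/-- `𝒞` is an effective competition cover of `G`. -/
def IsEffectiveCompetitionCover {V : Type*} (G : SimpleGraph V) (𝒞 : Finset (Set V)) : Prop :=
  IsEdgeCliqueCover G 𝒞 ∧ 𝒞.card = eccNumber G ∧
  (∀ C ∈ 𝒞, IsMaximalClique G C) ∧
  ∃ A : (V ⊕ Fin (compNumber G)) → (V ⊕ Fin (compNumber G)) → Prop, Accompanies G 𝒞 A

/-- The diamond graph: `K₄` minus the edge between vertices `2` and `3`. -/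
def diamondGraph : SimpleGraph (Fin 4) where
  Adj i j := i ≠ j ∧ ¬(i = 2 ∧ j = 3) ∧ ¬(i = 3 ∧ j = 2)
  symm := by
    constructor
    rintro i j ⟨h, h1, h2⟩
    exact ⟨h.symm, fun ⟨a, b⟩ => h2 ⟨b, a⟩, fun ⟨a, b⟩ => h1 ⟨b, a⟩⟩
  loopless := by
    constructor
    rintro i ⟨h, -⟩
    exact h rfl

/-- `G` contains `H` as an induced subgraph. -/
def ContainsInduced {V W : Type*} (G : SimpleGraph V) (H : SimpleGraph W) : Prop :=
  ∃ f : W ↪ V, ∀ a b, G.Adj (f a) (f b) ↔ H.Adj a b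

/-- `G` is diamond-free: it has no induced diamond. -/
def DiamondFree {V : Type*} (G : SimpleGraph V) : Prop :=
  ¬ ContainsInduced G diamondGraph

/-- `G` is chordal: it has no induced cycle of length at least `4`. -/
def Chordal {V : Type*} (G : SimpleGraph V) : Prop :=
  ∀ n, 4 ≤ n → ¬ ContainsInduced G (SimpleGraph.cycleGraph n)

/-- The edge `uv` is occupied by `C`: `C` is the unique maximal clique covering `uv`. -/
def Occupies {V : Type*} (G : SimpleGraph V) (C : Set V) (u v : V) : Prop :=
  G.Adj u v ∧ IsMaximalClique G C ∧ u ∈ C ∧ v ∈ C ∧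
    ∀ C' : Set V, IsMaximalClique G C' → u ∈ C' → v ∈ C' → C' = C

/-!
A chordal graph has a perfect elimination ordering. This is Dirac's theorem: if `a`, `b` are
nonadjacent and `C` is the component of `a` among the non-neighbours of `b`, the vertices outside
`C` adjacent to `C` are neighbours of `b` and form a clique, since two nonadjacent ones would
close an induced cycle of length at least four through `C` and `b`; induction on the two sides of
this clique separator yields two nonadjacent simplicial vertices.

In a perfect elimination ordering two maximal cliques with the same first vertex `u` both lie in
the clique formed by `u` and its later neighbours, so they coincide. List the cliques of a minimum
edge clique cover by maximal cliques in the order of their first vertices and let each vertex of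
a clique prey on the first vertex of the preceding clique; the vertices of the first clique prey
on an isolated vertex of `G`, or on the single added vertex if `G` has none. Arcs point to earlier
vertices, so the digraph is acyclic, and its competition graph is `G`. No added vertex is needed
when `G` has an isolated vertex, and at least one is needed otherwise because an acyclic digraph
has a sink.
-/

section

open SimpleGraph

variable {V : Type*} {G : SimpleGraph V}

lemma SimpleGraph.cycleGraph_adj_iff_val {n : ℕ} {a b : Fin (n + 2)} :
    (cycleGraph (n + 2)).Adj a b ↔ a.val + 1 = b.val ∨ b.val + 1 = a.val ∨
      (a.val = 0 ∧ b.val = n + 1) ∨ (b.val = 0 ∧ a.val = n + 1) := by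
  have hmod : ∀ x < 2 * (n + 2), x % (n + 2) = 1 ↔ x = 1 ∨ x = n + 3 := by
    intro x hx
    rcases Nat.lt_or_ge x (n + 2) with h | h
    · rw [Nat.mod_eq_of_lt h]
      omega
    · rw [Nat.mod_eq_sub_mod h, Nat.mod_eq_of_lt (by omega)]
      omega
  rw [cycleGraph_adj', Fin.sub_def, Fin.sub_def]
  dsimp only
  rw [hmod _ (by omega), hmod _ (by omega)]
  omega

lemma containsInduced_cycleGraph_of_apex {c : ℕ → V} {ℓ : ℕ} {y : V}
    (hinj : Set.InjOn c {i | i ≤ ℓ})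
    (hc : ∀ i ≤ ℓ, ∀ j ≤ ℓ, G.Adj (c i) (c j) ↔ i + 1 = j ∨ j + 1 = i)
    (hy : ∀ i ≤ ℓ, y ≠ c i) (hyc : ∀ i ≤ ℓ, G.Adj y (c i) ↔ i = 0 ∨ i = ℓ) :
    ContainsInduced G (cycleGraph (ℓ + 2)) := by
  let f : Fin (ℓ + 2) → V := fun a => if a.val ≤ ℓ then c a else y
  have hf : Function.Injective f := by
    intro a b hab
    simp only [f] at hab
    split_ifs at hab with ha hb hb
    · exact Fin.ext (hinj ha hb hab)
    · exact absurd hab.symm (hy _ ha)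
    · exact absurd hab (hy _ hb)
    · omega
  refine ⟨⟨f, hf⟩, fun a b => ?_⟩
  rw [cycleGraph_adj_iff_val]
  simp only [Function.Embedding.coeFn_mk, f]
  have := a.isLt
  have := b.isLt
  split_ifs with ha hb hb
  · rw [hc _ ha _ hb]
    omega
  · rw [adj_comm, hyc _ ha]
    omega
  · rw [hyc _ hb]
    omega
  · simp only [SimpleGraph.irrefl, false_iff]
    omega

lemma SimpleGraph.Walk.adj_getVert_iff_of_length_eq_dist {u v : V} {p : G.Walk u v}
    (hp : p.length = G.dist u v) {i j : ℕ} (hi : i ≤ p.length) (hj : j ≤ p.length) :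
    G.Adj (p.getVert i) (p.getVert j) ↔ i + 1 = j ∨ j + 1 = i := by
  refine ⟨fun h => ?_, ?_⟩
  · wlog hij : i ≤ j generalizing i j
    · have := this hj hi h.symm (by omega)
      omega
    have hne : i ≠ j := by
      rintro rfl
      exact G.loopless.irrefl _ h
    by_contra hfar
    have := dist_le ((p.take i).append (Walk.cons h (p.drop j)))
    simp only [Walk.length_append, Walk.take_length, Walk.length_cons, Walk.drop_length] at this
    omega
  · rintro (rfl | rfl)
    · exact p.adj_getVert_succ (by omega)
    · exact (p.adj_getVert_succ (by omega)).symm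

lemma getVert_mem_of_walk_induce {X : Set V} {u v : V}
    (p : ((⊤ : G.Subgraph).induce X).spanningCoe.Walk u v) (hu : u ∈ X) (i : ℕ) :
    p.getVert i ∈ X := by
  induction p generalizing i with
  | nil => simpa using hu
  | cons h q ih =>
    cases i with
    | zero => simpa using hu
    | succ i =>
      simp only [Subgraph.spanningCoe_adj, Subgraph.induce_adj, Subgraph.top_adj] at h
      exact ih h.2.1 i

lemma adj_getVert_iff_of_walk_induce {X : Set V} {u v : V}
    {p : ((⊤ : G.Subgraph).induce X).spanningCoe.Walk u v}
    (hp : p.length = ((⊤ : G.Subgraph).induce X).spanningCoe.dist u v) (hu : u ∈ X)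
    {i j : ℕ} (hi : i ≤ p.length) (hj : j ≤ p.length) :
    G.Adj (p.getVert i) (p.getVert j) ↔ i + 1 = j ∨ j + 1 = i := by
  rw [← p.adj_getVert_iff_of_length_eq_dist hp hi hj]
  simp [getVert_mem_of_walk_induce p hu]

lemma reachable_induce_of_reachable {H : SimpleGraph V} (hHG : H ≤ G) {a x y : V}
    (hx : H.Reachable a x) (hy : H.Reachable a y) :
    ((⊤ : G.Subgraph).induce {z | H.Reachable a z}).spanningCoe.Reachable x y := by
  suffices h : ∀ z, H.Reachable a z →
      ((⊤ : G.Subgraph).induce {z | H.Reachable a z}).spanningCoe.Reachable a z from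
    (h x hx).symm.trans (h y hy)
  intro z hz
  rw [reachable_iff_reflTransGen] at hz
  induction hz with
  | refl => rfl
  | tail hab hbc ih =>
    have hb := (reachable_iff_reflTransGen _ _).mpr hab
    exact ih.trans (Adj.reachable (by simpa using ⟨hb, hb.trans hbc.reachable, hHG hbc⟩))

lemma Chordal.adj_of_adj_of_connected (hG : Chordal G) {C : Set V} {b t t' : V}
    (hC : ∀ x ∈ C, ∀ y ∈ C, ((⊤ : G.Subgraph).induce C).spanningCoe.Reachable x y)
    (hb : b ∉ C) (hbC : ∀ x ∈ C, ¬ G.Adj b x) (hbt : G.Adj b t) (hbt' : G.Adj b t')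
    (htC : ∃ x ∈ C, G.Adj t x) (ht'C : ∃ x ∈ C, G.Adj t' x) (hne : t ≠ t') :
    G.Adj t t' := by
  by_contra hadj
  set X := insert t (insert t' C)
  obtain ⟨x, hx, htx⟩ := htC
  obtain ⟨x', hx', ht'x'⟩ := ht'C
  have hCX : ((⊤ : G.Subgraph).induce C).spanningCoe ≤ ((⊤ : G.Subgraph).induce X).spanningCoe :=
    Subgraph.spanningCoe_le_of_le (Subgraph.induce_mono_right fun _ h => by simp [X, h])
  have hreach : ((⊤ : G.Subgraph).induce X).spanningCoe.Reachable t t' :=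
    (Adj.reachable (by simp [X, hx, htx])).trans
      (((hC x hx x' hx').mono hCX).trans (Adj.reachable (by simp [X, hx', ht'x'.symm])))
  obtain ⟨p, hp, hlen⟩ := hreach.exists_path_of_dist
  have hinner : ∀ i, 0 < i → i < p.length → p.getVert i ∈ C := by
    intro i h0 hi
    rcases getVert_mem_of_walk_induce p (by simp [X]) i with h | h | h
    · have := hp.getVert_injOn (by simpa using hi.le) (by simp) (h.trans p.getVert_zero.symm)
      omega
    · have := hp.getVert_injOn (by simpa using hi.le) (by simp) (h.trans p.getVert_length.symm)
      omega
    · exact h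
  have hlen2 : 2 ≤ p.length := by
    by_contra! h
    interval_cases hl : p.length
    · exact hne (Walk.eq_of_length_eq_zero hl)
    · exact hadj (Subgraph.spanningCoe_le _ (Walk.adj_of_length_eq_one hl))
  refine hG (p.length + 2) (by omega) (containsInduced_cycleGraph_of_apex (y := b)
    hp.getVert_injOn (fun i hi j hj => adj_getVert_iff_of_walk_induce hlen (by simp [X]) hi hj)
    (fun i hi => ?_) (fun i hi => ?_))
  · rcases (by omega : i = 0 ∨ i = p.length ∨ (0 < i ∧ i < p.length)) with rfl | rfl | h
    · simpa using G.ne_of_adj hbt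
    · simpa using G.ne_of_adj hbt'
    · exact fun h' => hb (h' ▸ hinner i h.1 h.2)
  · rcases (by omega : i = 0 ∨ i = p.length ∨ (0 < i ∧ i < p.length)) with rfl | rfl | h
    · simpa using hbt
    · simpa using hbt'
    · simpa [h.1.ne', h.2.ne] using hbC _ (hinner i h.1 h.2)

lemma Chordal.exists_isClique_separator (hG : Chordal G) {S : Set V} {a b : V} (ha : a ∈ S)
    (hab : a ≠ b) (hnab : ¬ G.Adj a b) :
    ∃ C T : Set V, a ∈ C ∧ C ⊆ S ∧ T ⊆ S ∧ b ∉ C ∧ b ∉ T ∧ G.IsClique T ∧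
      ∀ x ∈ C, G.neighborSet x ∩ S ⊆ C ∪ T := by
  set D := {x ∈ S | x ≠ b ∧ ¬ G.Adj b x}
  set C := {x | ((⊤ : G.Subgraph).induce D).spanningCoe.Reachable a x}
  set T := {t ∈ S | t ∉ C ∧ ∃ x ∈ C, G.Adj t x}
  have haD : a ∈ D := ⟨ha, hab, fun h => hnab h.symm⟩
  have hCD : C ⊆ D := fun x ⟨p⟩ => by simpa using getVert_mem_of_walk_induce p haD p.length
  have hbT : ∀ t ∈ T, G.Adj b t := by
    rintro t ⟨htS, htC, x, hx, htx⟩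
    by_contra hbt
    have htb : t ≠ b := by
      rintro rfl
      exact (hCD hx).2.2 htx
    exact htC (hx.trans (Adj.reachable (by simpa using ⟨hCD hx, ⟨htS, htb, hbt⟩, htx.symm⟩)))
  have hbC : b ∉ C := fun h => (hCD h).2.1 rfl
  refine ⟨C, T, Reachable.refl a, fun x hx => (hCD hx).1, fun t ht => ht.1, hbC,
    fun h => G.loopless.irrefl b (hbT b h), fun t ht t' ht' hne => ?_, fun x hx y hy => ?_⟩
  · exact hG.adj_of_adj_of_connected
      (fun x hx y hy => reachable_induce_of_reachable (Subgraph.spanningCoe_le _) hx hy)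
      hbC (fun x hx => (hCD hx).2.2) (hbT t ht) (hbT t' ht') ht.2.2 ht'.2.2 hne
  · by_cases hyC : y ∈ C
    · exact Or.inl hyC
    · exact Or.inr ⟨hy.2, hyC, x, hx, hy.1.symm⟩

def SimpleGraph.IsSimplicialIn (G : SimpleGraph V) (S : Set V) (v : V) : Prop :=
  G.IsClique (G.neighborSet v ∩ S)

def SimpleGraph.HasSimplicialPairIn (G : SimpleGraph V) (S : Set V) : Prop :=
  ∃ v ∈ S, ∃ w ∈ S, v ≠ w ∧ ¬ G.Adj v w ∧ G.IsSimplicialIn S v ∧ G.IsSimplicialIn S w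

lemma SimpleGraph.IsSimplicialIn.of_inter_subset {S T : Set V} {v : V} (h : G.IsSimplicialIn T v)
    (hST : G.neighborSet v ∩ S ⊆ T) : G.IsSimplicialIn S v :=
  IsClique.subset (fun _ hx => ⟨hx.1, hST hx⟩ : G.neighborSet v ∩ S ⊆ G.neighborSet v ∩ T) h

lemma exists_isSimplicialIn_of_separator {S U X : Set V} (hX : X.Nonempty)
    (hsep : G.IsClique (U \ X)) (hnbr : ∀ x ∈ X, G.neighborSet x ∩ S ⊆ U)
    (hU : G.IsClique U ∨ G.HasSimplicialPairIn U) : ∃ v ∈ X, G.IsSimplicialIn S v := by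
  have lift : ∀ v ∈ X, G.IsSimplicialIn U v → G.IsSimplicialIn S v := fun v hv h =>
    h.of_inter_subset (hnbr v hv)
  rcases hU with hU | ⟨v, hvU, w, hwU, hvw, hnvw, hv, hw⟩
  · obtain ⟨x, hx⟩ := hX
    exact ⟨x, hx, lift x hx (hU.subset Set.inter_subset_right)⟩
  · by_cases hvX : v ∈ X
    · exact ⟨v, hvX, lift v hvX hv⟩
    by_cases hwX : w ∈ X
    · exact ⟨w, hwX, lift w hwX hw⟩
    exact absurd (hsep ⟨hvU, hvX⟩ ⟨hwU, hwX⟩ hvw) hnvw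

theorem Chordal.isClique_or_hasSimplicialPairIn [Finite V] (hG : Chordal G) (S : Set V) :
    G.IsClique S ∨ G.HasSimplicialPairIn S := by
  induction S using WellFoundedLT.induction with
  | _ S ih =>
  by_cases hS : G.IsClique S
  · exact Or.inl hS
  obtain ⟨a, ha, b, hb, hab, hnab⟩ : ∃ a ∈ S, ∃ b ∈ S, a ≠ b ∧ ¬ G.Adj a b := by
    simpa [SimpleGraph.IsClique, Set.Pairwise] using hS
  obtain ⟨C, T, haC, hCS, hTS, hbC, hbT, hT, hCT⟩ := hG.exists_isClique_separator ha hab hnab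
  have hTC : ∀ x ∈ S, x ∉ C ∪ T → ∀ y ∈ C, ¬ G.Adj x y := fun x hxS hx y hy hxy =>
    hx (hCT y hy ⟨hxy.symm, hxS⟩)
  obtain ⟨v, hvC, hv⟩ := exists_isSimplicialIn_of_separator (S := S) (U := C ∪ T) ⟨a, haC⟩
    (hT.subset fun _ h => h.1.resolve_left h.2) hCT
    (ih _ ((Set.ssubset_iff_of_subset (Set.union_subset hCS hTS)).mpr
      ⟨b, hb, by simp [hbC, hbT]⟩))
  obtain ⟨w, ⟨hwS, hwCT⟩, hw⟩ := exists_isSimplicialIn_of_separator (S := S) (U := S \ C)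
    (X := S \ (C ∪ T)) ⟨b, hb, by simp [hbC, hbT]⟩
    (hT.subset fun _ ⟨⟨hxS, hxC⟩, hx⟩ => by_contra fun hxT => hx ⟨hxS, by simp [hxC, hxT]⟩)
    (fun x hx y hy => ⟨hy.2, fun hyC => hTC x hx.1 hx.2 y hyC hy.1⟩)
    (ih _ ((Set.ssubset_iff_of_subset Set.sdiff_subset).mpr ⟨a, ha, fun h => h.2 haC⟩))
  refine Or.inr ⟨v, hCS hvC, w, hwS, ?_, fun hvw => hTC w hwS hwCT v hvC hvw.symm, hv, hw⟩
  rintro rfl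
  exact hwCT (Or.inl hvC)

theorem Chordal.exists_isSimplicialIn [Finite V] (hG : Chordal G) {S : Set V} (hS : S.Nonempty) :
    ∃ v ∈ S, G.IsSimplicialIn S v := by
  rcases hG.isClique_or_hasSimplicialPairIn S with h | ⟨v, hv, -, -, -, -, hsv, -⟩
  · obtain ⟨v, hv⟩ := hS
    exact ⟨v, hv, h.subset Set.inter_subset_right⟩
  · exact ⟨v, hv, hsv⟩

def IsPerfectEliminationOrder (G : SimpleGraph V) (r : V → ℕ) : Prop :=
  Function.Injective r ∧ ∀ v, G.IsSimplicialIn {x | r v < r x} v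

theorem Chordal.exists_eliminationOrder_on [Finite V] (hG : Chordal G) (S : Set V) :
    ∃ r : V → ℕ, S.InjOn r ∧ ∀ v ∈ S, G.IsSimplicialIn {x ∈ S | r v < r x} v := by
  classical
  induction S using WellFoundedLT.induction with
  | _ S ih =>
  rcases S.eq_empty_or_nonempty with rfl | hS
  · exact ⟨0, by simp, by simp⟩
  obtain ⟨v, hvS, hv⟩ := hG.exists_isSimplicialIn hS
  obtain ⟨r, hinj, hr⟩ := ih (S \ {v}) (Set.sdiff_singleton_ssubset.mpr hvS)
  refine ⟨fun x => if x = v then 0 else r x + 1, fun x hx y hy hxy => ?_, fun u hu => ?_⟩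
  · dsimp only at hxy
    split_ifs at hxy with hxv hyv hyv
    · exact hxv.trans hyv.symm
    · exact hinj ⟨hx, hxv⟩ ⟨hy, hyv⟩ (by omega)
  · by_cases huv : u = v
    · subst huv
      exact hv.of_inter_subset fun x hx => hx.2.1
    · refine (hr u ⟨hu, huv⟩).of_inter_subset fun x hx => ?_
      obtain ⟨-, hxS, hux⟩ := hx
      have hxv : x ≠ v := by
        rintro rfl
        simp [huv] at hux
      simp only [huv, hxv, if_false] at hux
      exact ⟨⟨hxS, hxv⟩, by omega⟩

theorem Chordal.exists_isPerfectEliminationOrder [Finite V] (hG : Chordal G) :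
    ∃ r : V → ℕ, IsPerfectEliminationOrder G r := by
  obtain ⟨r, hinj, hr⟩ := hG.exists_eliminationOrder_on Set.univ
  exact ⟨r, Set.injOn_univ.mp hinj, fun v => by simpa using hr v trivial⟩

theorem IsPerfectEliminationOrder.eq_of_isMaximalClique {r : V → ℕ}
    (hr : IsPerfectEliminationOrder G r) {C D : Set V} {u : V}
    (hC : IsMaximalClique G C) (hD : IsMaximalClique G D) (huC : u ∈ C) (huD : u ∈ D)
    (hminC : ∀ x ∈ C, r u ≤ r x) (hminD : ∀ x ∈ D, r u ≤ r x) : C = D := by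
  set K := insert u (G.neighborSet u ∩ {x | r u < r x})
  have hK : G.IsClique K := (hr.2 u).insert fun x hx _ => hx.1
  have hsub : ∀ E, G.IsClique E → u ∈ E → (∀ x ∈ E, r u ≤ r x) → E ⊆ K := by
    intro E hE huE hmin x hx
    rcases eq_or_ne u x with rfl | hux
    · exact Set.mem_insert _ _
    · exact Or.inr ⟨hE huE hx hux, (hmin x hx).lt_of_ne fun h => hux (hr.1 h)⟩
  exact (hC.2 K hK (hsub C hC.1 huC hminC)).trans (hD.2 K hK (hsub D hD.1 huD hminD)).symm

lemma eccNumber_le {F : Finset (Set V)} (hF : IsEdgeCliqueCover G F) : eccNumber G ≤ F.card :=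
  Nat.sInf_le ⟨F, hF, rfl⟩

lemma exists_isEdgeCliqueCover_card_eq [Finite V] (G : SimpleGraph V) :
    ∃ F, IsEdgeCliqueCover G F ∧ F.card = eccNumber G := by
  set F := (Set.toFinite {C : Set V | G.IsClique C}).toFinset
  have hF : IsEdgeCliqueCover G F :=
    ⟨fun C hC => by simpa [F] using hC,
      fun u v huv => ⟨{u, v}, by simpa [F] using fun _ => huv, by simp, by simp⟩⟩
  exact Nat.sInf_mem (s := {n | ∃ F, IsEdgeCliqueCover G F ∧ F.card = n}) ⟨F.card, F, hF, rfl⟩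

lemma exists_isMaximalClique_superset [Finite V] {C : Set V} (hC : G.IsClique C) :
    ∃ D, IsMaximalClique G D ∧ C ⊆ D := by
  obtain ⟨D, hCD, hD⟩ := Finite.exists_le_maximal hC
  exact ⟨D, ⟨hD.1, fun E hE hDE => le_antisymm hDE (hD.2 hE hDE)⟩, hCD⟩

lemma exists_minimum_cover_of_isMaximalClique [Finite V] (G : SimpleGraph V) :
    ∃ 𝒞 : Finset (Set V), IsEdgeCliqueCover G 𝒞 ∧ 𝒞.card = eccNumber G ∧
      ∀ C ∈ 𝒞, IsMaximalClique G C := by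
  classical
  obtain ⟨F, hF, hcard⟩ := exists_isEdgeCliqueCover_card_eq G
  choose! M hM hCM using fun C (hC : G.IsClique C) => exists_isMaximalClique_superset hC
  have hcov : IsEdgeCliqueCover G (F.image M) := by
    refine ⟨?_, fun u v huv => ?_⟩
    · simpa using fun C hC => (hM C (hF.1 C hC)).1
    · obtain ⟨C, hC, hu, hv⟩ := hF.2 u v huv
      exact ⟨M C, Finset.mem_image_of_mem M hC, hCM C (hF.1 C hC) hu, hCM C (hF.1 C hC) hv⟩
  refine ⟨F.image M, hcov, le_antisymm (Finset.card_image_le.trans hcard.le) (eccNumber_le hcov),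
    ?_⟩
  simpa using fun C hC => hM C (hF.1 C hC)

section MinimumCover

variable {F : Finset (Set V)}

lemma IsEdgeCliqueCover.exists_adj_of_card_eq (hF : IsEdgeCliqueCover G F)
    (hcard : F.card = eccNumber G) {C : Set V} (hC : C ∈ F) : ∃ x ∈ C, ∃ y ∈ C, G.Adj x y := by
  by_contra! h
  have hF' : IsEdgeCliqueCover G (F.erase C) := by
    refine ⟨fun D hD => hF.1 D (Finset.mem_of_mem_erase hD), fun u v huv => ?_⟩
    obtain ⟨D, hD, hu, hv⟩ := hF.2 u v huv
    refine ⟨D, Finset.mem_erase.mpr ⟨?_, hD⟩, hu, hv⟩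
    rintro rfl
    exact h u hu v hv huv
  have := eccNumber_le hF'
  rw [Finset.card_erase_of_mem hC] at this
  have := Finset.card_pos.mpr ⟨C, hC⟩
  omega

lemma IsEdgeCliqueCover.nonempty_of_card_eq (hF : IsEdgeCliqueCover G F)
    (hcard : F.card = eccNumber G) {C : Set V} (hC : C ∈ F) : C.Nonempty :=
  let ⟨x, hx, _⟩ := hF.exists_adj_of_card_eq hcard hC
  ⟨x, hx⟩

lemma IsEdgeCliqueCover.notMem_of_card_eq (hF : IsEdgeCliqueCover G F)
    (hcard : F.card = eccNumber G) {C : Set V} (hC : C ∈ F) {p : V} (hp : ∀ u, ¬ G.Adj p u) :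
    p ∉ C := by
  intro hpC
  obtain ⟨x, hx, y, hy, hxy⟩ := hF.exists_adj_of_card_eq hcard hC
  rcases eq_or_ne p x with rfl | hpx
  · exact hp y hxy
  · exact hp x (hF.1 C hC hpC hx hpx)

end MinimumCover

lemma Digraph.acyclic_of_lt {W : Type*} {A : W → W → Prop} (ν : W → ℕ)
    (h : ∀ x y, A x y → ν y < ν x) : Digraph.Acyclic A := fun v hv => by
  have : Relation.TransGen (· > ·) (ν v) (ν v) := Relation.TransGen.lift ν h v v hv
  rw [Relation.transGen_eq_self] at this
  exact lt_irrefl _ this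

lemma Digraph.Acyclic.exists_sink {W : Type*} [Finite W] [Nonempty W] {A : W → W → Prop}
    (hA : Digraph.Acyclic A) : ∃ x, ∀ z, ¬ A x z := by
  have : IsTrans W (flip (Relation.TransGen A)) := ⟨fun _ _ _ h₁ h₂ => h₂.trans h₁⟩
  have : Std.Irrefl (flip (Relation.TransGen A)) := ⟨hA⟩
  obtain ⟨x, -, hx⟩ := (Finite.wellFounded_of_trans_of_irrefl (flip (Relation.TransGen A))).has_min
    Set.univ ⟨Classical.arbitrary W, trivial⟩
  exact ⟨x, fun z hz => hx z trivial (Relation.TransGen.single hz)⟩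

lemma Finset.exists_injOn_lt {α β : Type*} [LinearOrder α] {f : β → α} {T : Finset β}
    (hf : Set.InjOn f T) {s : β} (hs : ∀ t ∈ T, f s < f t) :
    ∃ p : β → β, Set.InjOn p T ∧ ∀ t ∈ T, f (p t) < f t := by
  classical
  -- `p t` is the predecessor of `t` in `insert s T`, ordered by `f`
  choose! p hp hpmax using fun t (ht : t ∈ T) =>
    (insert s T |>.filter (f · < f t)).exists_max_image f ⟨s, by simp [hs t ht]⟩
  have hlt : ∀ t ∈ T, f (p t) < f t := fun t ht => (Finset.mem_filter.mp (hp t ht)).2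
  have hne : ∀ t ∈ T, ∀ t' ∈ T, f t < f t' → p t ≠ p t' := fun t ht t' ht' htt' h =>
    (hlt t ht).not_ge (h ▸ hpmax t' ht' t (by simp [ht, htt']))
  refine ⟨p, fun t ht t' ht' h => ?_, hlt⟩
  by_contra htt'
  rcases lt_or_gt_of_ne fun h' => htt' (hf ht ht' h') with h' | h'
  · exact hne t ht t' ht' h' h
  · exact hne t' ht' t ht h' h.symm

section CoverDigraph

variable {k : ℕ} {𝒞 : Finset (Set V)}

def coverDigraph (𝒞 : Finset (Set V)) (w : 𝒞 → V ⊕ Fin k) (x y : V ⊕ Fin k) : Prop :=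
  ∃ C : 𝒞, ∃ u ∈ (C : Set V), x = Sum.inl u ∧ y = w C

lemma competitionGraph_coverDigraph (hcov : IsEdgeCliqueCover G 𝒞) {w : 𝒞 → V ⊕ Fin k}
    (hw : Function.Injective w) : competitionGraph (coverDigraph 𝒞 w) = addIsolated G k := by
  ext x y
  constructor
  · rintro ⟨hxy, z, ⟨C, u, hu, rfl, rfl⟩, ⟨C', v, hv, rfl, hC⟩⟩
    obtain rfl := hw hC
    exact ⟨u, v, hcov.1 _ C.2 hu hv fun h => hxy (h ▸ rfl), rfl, rfl⟩
  · rintro ⟨u, v, huv, rfl, rfl⟩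
    obtain ⟨C, hC, hu, hv⟩ := hcov.2 u v huv
    exact ⟨fun h => huv.ne (Sum.inl_injective h), w ⟨C, hC⟩, ⟨⟨C, hC⟩, u, hu, rfl, rfl⟩,
      ⟨⟨C, hC⟩, v, hv, rfl, rfl⟩⟩

lemma setOf_exists_coverDigraph (hne : ∀ C ∈ 𝒞, C.Nonempty) (w : 𝒞 → V ⊕ Fin k) :
    {x | ∃ u, coverDigraph 𝒞 w u x} = Set.range w := by
  ext x
  constructor
  · rintro ⟨-, C, -, -, -, rfl⟩
    exact ⟨C, rfl⟩
  · rintro ⟨C, rfl⟩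
    obtain ⟨u, hu⟩ := hne C C.2
    exact ⟨_, C, u, hu, rfl, rfl⟩

lemma IsPerfectEliminationOrder.exists_injective_lt [Finite V] {r : V → ℕ}
    (hr : IsPerfectEliminationOrder G r) (hmax : ∀ C ∈ 𝒞, IsMaximalClique G C)
    (hne : ∀ C ∈ 𝒞, C.Nonempty) (s : V ⊕ Fin k) (hs : ∀ C ∈ 𝒞, ∀ u ∈ C, Sum.inl u ≠ s) :
    ∃ (w : 𝒞 → V ⊕ Fin k) (ν : V ⊕ Fin k → ℕ), Function.Injective w ∧
      ∀ C : 𝒞, ∀ u ∈ (C : Set V), ν (w C) < ν (Sum.inl u) := by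
  classical
  choose m hmC hmin using fun C : 𝒞 => Set.exists_min_image (C : Set V) r C.1.toFinite (hne C C.2)
  have hm : Function.Injective m := fun C D h => Subtype.ext <|
    hr.eq_of_isMaximalClique (hmax C C.2) (hmax D D.2) (hmC C) (h ▸ hmC D) (hmin C) (h ▸ hmin D)
  let ν : V ⊕ Fin k → ℕ := fun x => if x = s then 0 else Sum.elim (r · + 1) 0 x
  have hν : ∀ C : 𝒞, ∀ u ∈ (C : Set V), ν (Sum.inl u) = r u + 1 := fun C u hu => by
    simp [ν, hs C C.2 u hu]
  set T : Finset (V ⊕ Fin k) := Finset.univ.image (Sum.inl ∘ m)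
  have hmT : ∀ C, Sum.inl (m C) ∈ T := fun C => Finset.mem_image_of_mem _ (Finset.mem_univ C)
  have hT : ∀ x ∈ T, ∃ C, x = Sum.inl (m C) ∧ ν x = r (m C) + 1 := fun x hx => by
    obtain ⟨C, -, rfl⟩ := Finset.mem_image.mp hx
    exact ⟨C, rfl, hν C _ (hmC C)⟩
  obtain ⟨p, hp, hpν⟩ := Finset.exists_injOn_lt (f := ν) (T := T) (s := s)
    (fun x hx y hy h => by
      obtain ⟨C, rfl, hC⟩ := hT x hx
      obtain ⟨D, rfl, hD⟩ := hT y hy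
      rw [hm (hr.1 (show r (m C) = r (m D) by omega))])
    (fun x hx => by
      obtain ⟨C, -, hC⟩ := hT x hx
      simp [ν, hC])
  refine ⟨fun C => p (Sum.inl (m C)), ν, fun C D h => hm (Sum.inl_injective (hp (hmT C) (hmT D) h)),
    fun C u hu => ?_⟩
  show ν (p (Sum.inl (m C))) < ν (Sum.inl u)
  have := hpν _ (hmT C)
  have := hmin C u hu
  rw [hν C _ (hmC C)] at *
  rw [hν C u hu]
  omega

lemma IsPerfectEliminationOrder.exists_realizer [Finite V] {r : V → ℕ}
    (hr : IsPerfectEliminationOrder G r) (hcov : IsEdgeCliqueCover G 𝒞)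
    (hmax : ∀ C ∈ 𝒞, IsMaximalClique G C) (hne : ∀ C ∈ 𝒞, C.Nonempty)
    (s : V ⊕ Fin k) (hs : ∀ C ∈ 𝒞, ∀ u ∈ C, Sum.inl u ≠ s) :
    ∃ A, Realizes G k A ∧ ∃ w : 𝒞 → V ⊕ Fin k, Function.Injective w ∧
      (∀ C : 𝒞, ∀ v ∈ (C : Set V), A (Sum.inl v) (w C)) ∧ {x | ∃ u, A u x} = Set.range w := by
  obtain ⟨w, ν, hw, hν⟩ := hr.exists_injective_lt hmax hne s hs
  refine ⟨coverDigraph 𝒞 w, ⟨Digraph.acyclic_of_lt ν ?_, competitionGraph_coverDigraph hcov hw⟩,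
    w, hw, fun C v hv => ⟨C, v, hv, rfl, rfl⟩, setOf_exists_coverDigraph hne w⟩
  rintro _ _ ⟨C, u, hu, rfl, rfl⟩
  exact hν C u hu

end CoverDigraph

lemma not_realizes_zero [Finite V] [Nonempty V] (h : ∀ v, ∃ u, G.Adj v u)
    (A : V ⊕ Fin 0 → V ⊕ Fin 0 → Prop) : ¬ Realizes G 0 A := by
  rintro ⟨hA, hcomp⟩
  obtain ⟨x | i, hx⟩ := hA.exists_sink
  · obtain ⟨u, hu⟩ := h x
    have : (competitionGraph A).Adj (Sum.inl x) (Sum.inl u) := hcomp ▸ ⟨x, u, hu, rfl, rfl⟩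
    obtain ⟨-, z, hz, -⟩ := this
    exact hx z hz
  · exact i.elim0

lemma compNumber_pos (hreal : ∃ k A, Realizes G k A) (h0 : ∀ A, ¬ Realizes G 0 A) :
    0 < compNumber G := by
  have hmem : ∃ A, Realizes G (compNumber G) A := Nat.sInf_mem hreal
  refine Nat.pos_of_ne_zero fun h => ?_
  rw [h] at hmem
  obtain ⟨A, hA⟩ := hmem
  exact h0 A hA

end

/-- every chordal graph with at least one edge has an effective competition
cover. -/
theorem stmt8 {V : Type*} [Fintype V] (G : SimpleGraph V) (hG : Chordal G)
    (hedge : ∃ u v : V, G.Adj u v) :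
    ∃ 𝒞 : Finset (Set V), IsEffectiveCompetitionCover G 𝒞 := by
  obtain ⟨r, hr⟩ := hG.exists_isPerfectEliminationOrder
  obtain ⟨𝒞, hcov, hcard, hmax⟩ := exists_minimum_cover_of_isMaximalClique G
  have hne := fun C (hC : C ∈ 𝒞) => hcov.nonempty_of_card_eq hcard hC
  obtain ⟨s, hs⟩ : ∃ s : V ⊕ Fin (compNumber G), ∀ C ∈ 𝒞, ∀ u ∈ C, Sum.inl u ≠ s := by
    by_cases hiso : ∃ p, ∀ u, ¬ G.Adj p u
    · obtain ⟨p, hp⟩ := hiso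
      exact ⟨Sum.inl p, fun C hC u hu h =>
        hcov.notMem_of_card_eq hcard hC hp (Sum.inl_injective h ▸ hu)⟩
    · push Not at hiso
      have : Nonempty V := ⟨hedge.choose⟩
      have hk := compNumber_pos ⟨1, (hr.exists_realizer hcov hmax hne (Sum.inr 0) (by simp)).imp
        fun _ h => h.1⟩ (not_realizes_zero hiso)
      exact ⟨Sum.inr ⟨0, hk⟩, by simp⟩
  exact ⟨𝒞, hcov, hcard, hmax, hr.exists_realizer hcov hmax hne s hs⟩
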